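/- arXiv:1605.07594 — 5 statements merged into one kernel-verified Lean document; each statement's English description precedes it below -/
import Mathlib

section
/- Let K be a field containing all p-th roots of unity with char(K) ≠ p, and suppose that for every primitive p-th root of unity ξ_p the equation x^p = ξ_p^q has no solution in K unless p divides q (the 'irreducible condition'). Let Λ be the Novikov field over K with value group Γ ≤ ℝ, i.e. formal sums Σ_{g∈Γ} a_g t^g with a_g ∈ K such that for every C ∈ ℝ only finitely many g < C have a_g ≠ 0. Then Λ also satisfies the irreducible condition: for any primitive p-th root of unity ξ_p and any q not divisible by p, the equation x^p = ξ_p^q has no solution in Λ. -/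
open scoped BigOperators

/-- A coefficient function `a : ℝ → K` represents an element of the Novikov field
`Λ^{K,Γ}` if its support lies in `Γ` and is finite below every level `C`. -/
def IsNovikov {K : Type*} [Field K] (Γ : AddSubgroup ℝ) (a : ℝ → K) : Prop :=
  (∀ g : ℝ, a g ≠ 0 → g ∈ Γ) ∧ ∀ C : ℝ, {g : ℝ | a g ≠ 0 ∧ g < C}.Finite

/-- Multiplication of Novikov series (convolution of coefficient functions). -/
noncomputable def novMul {K : Type*} [Field K] (a b : ℝ → K) : ℝ → K :=
  fun g => ∑ᶠ h : ℝ, a h * b (g - h)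

/-- The unit Novikov series `t^0`. -/
noncomputable def novOne {K : Type*} [Field K] : ℝ → K :=
  fun g => if g = 0 then 1 else 0

/-- Powers of a Novikov series. -/
noncomputable def novPow {K : Type*} [Field K] (a : ℝ → K) : ℕ → ℝ → K
  | 0 => novOne
  | n + 1 => novMul a (novPow a n)

/-! Valuation and leading coefficient are multiplicative, so a `p`-th root of the constant
`ξ ^ q` has valuation `0`, and its coefficient at `t ^ 0` is a `p`-th root of `ξ ^ q` in `K`
itself. -/

section Leading

variable {K : Type*} [Field K]

theorem exists_leading_term {M : Type*} [Zero M] {a : ℝ → M}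
    (hfin : ∀ C : ℝ, {g : ℝ | a g ≠ 0 ∧ g < C}.Finite) (ha : a ≠ 0) :
    ∃ μ, a μ ≠ 0 ∧ ∀ g < μ, a g = 0 := by
  obtain ⟨g₀, hg₀⟩ := Function.ne_iff.mp ha
  obtain ⟨μ, ⟨hμ, hμlt⟩, hleast⟩ :=
    Set.exists_min_image _ id (hfin (g₀ + 1)) ⟨g₀, hg₀, by linarith⟩
  refine ⟨μ, hμ, fun g hg => ?_⟩
  by_contra hag
  exact (hleast g ⟨hag, hg.trans hμlt⟩).not_gt hg

theorem novMul_eq_zero_of_lt {a b : ℝ → K} {μ ν : ℝ}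
    (ha : ∀ g < μ, a g = 0) (hb : ∀ g < ν, b g = 0) {g : ℝ} (hg : g < μ + ν) :
    novMul a b g = 0 := by
  refine finsum_eq_zero_of_forall_eq_zero fun h => ?_
  rcases lt_or_ge h μ with hh | hh
  · rw [ha h hh, zero_mul]
  · rw [hb (g - h) (by linarith), mul_zero]

theorem novMul_add_eq_mul {a b : ℝ → K} {μ ν : ℝ}
    (ha : ∀ g < μ, a g = 0) (hb : ∀ g < ν, b g = 0) :
    novMul a b (μ + ν) = a μ * b ν := by
  refine (finsum_eq_single _ μ fun h hh => ?_).trans (by rw [add_sub_cancel_left])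
  rcases hh.lt_or_gt with hh | hh
  · rw [ha h hh, zero_mul]
  · rw [hb (μ + ν - h) (by linarith), mul_zero]

theorem novPow_eq_zero_of_lt {a : ℝ → K} {μ : ℝ} (ha : ∀ g < μ, a g = 0) (n : ℕ)
    {g : ℝ} (hg : g < n * μ) : novPow a n g = 0 := by
  induction n generalizing g with
  | zero =>
    rw [Nat.cast_zero, zero_mul] at hg
    exact if_neg hg.ne
  | succ n ih =>
    rw [Nat.cast_succ, add_one_mul, add_comm] at hg
    exact novMul_eq_zero_of_lt ha (fun g hg => ih hg) hg

theorem novPow_mul_eq_pow {a : ℝ → K} {μ : ℝ} (ha : ∀ g < μ, a g = 0) (n : ℕ) :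
    novPow a n (n * μ) = a μ ^ n := by
  induction n with
  | zero => simp [novPow, novOne]
  | succ n ih =>
    rw [Nat.cast_succ, add_one_mul, add_comm (n * μ), pow_succ', ← ih]
    exact novMul_add_eq_mul ha fun g hg => novPow_eq_zero_of_lt ha n hg

theorem novPow_zero_left {n : ℕ} (hn : n ≠ 0) : novPow (0 : ℝ → K) n = 0 := by
  obtain ⟨m, rfl⟩ := Nat.exists_eq_succ_of_ne_zero hn
  funext g
  simp [novPow, novMul]

end Leading

theorem novikov_irreducible_condition_general
    {K : Type*} [Field K] (p : ℕ) (hp : p.Prime)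
    (hK : ∀ (ξ : K), IsPrimitiveRoot ξ p → ∀ (x : K) (q : ℕ), x ^ p = ξ ^ q → p ∣ q)
    (Γ : AddSubgroup ℝ)
    (ξ : K) (hξ : IsPrimitiveRoot ξ p) (q : ℕ) (hq : ¬ p ∣ q) :
    ¬ ∃ a : ℝ → K, IsNovikov Γ a ∧
        novPow a p = fun g : ℝ => if g = 0 then ξ ^ q else 0 := by
  rintro ⟨a, ⟨-, hfin⟩, hpow⟩
  suffices ∃ x : K, x ^ p = ξ ^ q from hq (hK ξ hξ _ q this.choose_spec)
  obtain rfl | ha := eq_or_ne a 0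
  · refine ⟨0, ?_⟩
    simpa [novPow_zero_left hp.ne_zero, zero_pow hp.ne_zero] using congrFun hpow 0
  obtain ⟨μ, haμ, hlow⟩ := exists_leading_term hfin ha
  have hcoeff : a μ ^ p = if (p : ℝ) * μ = 0 then ξ ^ q else 0 := by
    rw [← novPow_mul_eq_pow hlow, hpow]
  split_ifs at hcoeff
  · exact ⟨a μ, hcoeff⟩
  · exact absurd ((pow_eq_zero_iff hp.ne_zero).mp hcoeff) haμ

/-- If the field `K` satisfies the irreducible condition for the prime
`p` (char `K ≠ p`, `K` contains all `p`-th roots of unity, and `x ^ p = ξ_p ^ q` has no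
solution in `K` unless `p ∣ q`), then the Novikov field `Λ^{K,Γ}` also satisfies the
irreducible condition: for any primitive `p`-th root of unity `ξ` and any `q` not
divisible by `p`, the equation `x ^ p = ξ ^ q` has no solution among Novikov series. -/
theorem novikov_irreducible_condition
    {K : Type*} [Field K] (p : ℕ) (hp : p.Prime)
    (hchar : (p : K) ≠ 0)
    (hroots : ∃ ζ : K, IsPrimitiveRoot ζ p)
    (hK : ∀ (ξ : K), IsPrimitiveRoot ξ p → ∀ (x : K) (q : ℕ), x ^ p = ξ ^ q → p ∣ q)
    (Γ : AddSubgroup ℝ)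
    (ξ : K) (hξ : IsPrimitiveRoot ξ p) (q : ℕ) (hq : ¬ p ∣ q) :
    ¬ ∃ a : ℝ → K, IsNovikov Γ a ∧
        novPow a p = fun g : ℝ => if g = 0 then ξ ^ q else 0 :=
  novikov_irreducible_condition_general p hp hK Γ ξ hξ q hq
end

section
/- Let Λ be a Novikov field over K with value group Γ, and let (V, ℓ) be a filtered Λ-vector space with filtration function ℓ satisfying ℓ(λv) = ℓ(v) − ν(λ). If {v_1, …, v_n} is an orthogonal set in V (meaning ℓ(Σ λ_i v_i) = max_i (ℓ(v_i) − ν(λ_i)) for all λ_i ∈ Λ), and w_1, …, w_n are vectors with ℓ(w_i) < ℓ(v_i) for each i, then {v_1 + w_1, …, v_n + w_n} is also an orthogonal set. -/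
open scoped BigOperators

/-- A finite family `v : ι → V` is orthogonal (over the Novikov field `Λ`) with respect to the
filtration function `ℓ` if `ℓ (∑ λᵢ • vᵢ) = maxᵢ ℓ (λᵢ • vᵢ)` for all scalars. -/
def IsOrthogonal (Λ : Type*) {V ι : Type*} [Field Λ] [AddCommGroup V] [Module Λ V]
    [Fintype ι] (ℓ : V → EReal) (v : ι → V) : Prop :=
  ∀ c : ι → Λ, ℓ (∑ i, c i • v i) = Finset.univ.sup fun i => ℓ (c i • v i)

/-!
Each perturbed term `c i • (v i + w i)` has the same filtration level as `c i • v i`, and the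
total perturbation `∑ c i • w i` lies strictly below `ℓ (∑ c i • v i) = maxᵢ ℓ (c i • v i)`, so by
the ultrametric inequality it changes neither side of the orthogonality identity.
-/

open Finset

namespace IsNonarchimedean

variable {S V ι : Type*} [LinearOrder S] [AddCommGroup V] {ℓ : V → S}

theorem apply_add_eq_of_lt (hℓ : IsNonarchimedean ℓ) (hneg : ∀ x, ℓ (-x) = ℓ x) {x y : V}
    (h : ℓ y < ℓ x) : ℓ (x + y) = ℓ x :=
  (add_eq_max_of_ne' ℓ hℓ (fun z => (hneg z).symm) h.ne').trans (max_eq_left h.le)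

theorem apply_sum_lt (hℓ : IsNonarchimedean ℓ) {s : Finset ι} (hs : s.Nonempty) {g : ι → V}
    {a : S} (h : ∀ i ∈ s, ℓ (g i) < a) : ℓ (∑ i ∈ s, g i) < a :=
  (apply_sum_le_sup hℓ hs).trans_lt ((sup'_lt_iff hs).2 h)

theorem apply_sum_add_eq [OrderBot S] (hℓ : IsNonarchimedean ℓ) (hneg : ∀ x, ℓ (-x) = ℓ x)
    {s : Finset ι} {f g : ι → V} (hf : ℓ (∑ i ∈ s, f i) = s.sup fun i => ℓ (f i))
    (hg : ∀ i ∈ s, g i ≠ 0 → ℓ (g i) < ℓ (f i)) :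
    ℓ (∑ i ∈ s, f i + ∑ i ∈ s, g i) = ℓ (∑ i ∈ s, f i) := by
  classical
  rw [← sum_filter_ne_zero s (f := g)]
  set t := s.filter fun i => g i ≠ 0
  rcases t.eq_empty_or_nonempty with ht | ht
  · rw [ht, sum_empty, add_zero]
  refine apply_add_eq_of_lt hℓ hneg (apply_sum_lt hℓ ht fun i hi => ?_)
  obtain ⟨his, hgi⟩ := mem_filter.1 hi
  exact hf ▸ (hg i his hgi).trans_le (le_sup (f := fun i => ℓ (f i)) his)

end IsNonarchimedean

theorem filtration_smul_lt_smul {Λ V : Type*} [Zero Λ] [SMul Λ V] {ν : Λ → ℝ} {ℓ : V → EReal}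
    (hsmul : ∀ (c : Λ) (x : V), c ≠ 0 → ℓ (c • x) = ℓ x - (ν c : EReal)) {c : Λ} (hc : c ≠ 0)
    {x y : V} (h : ℓ y < ℓ x) : ℓ (c • y) < ℓ (c • x) := by
  rw [hsmul c x hc, hsmul c y hc]
  exact EReal.sub_lt_sub_of_lt_of_le h le_rfl (EReal.coe_ne_bot _) (EReal.coe_ne_top _)

theorem strict_lower_perturbation_preserves_orthogonality_general
    {Λ V ι : Type*} [Field Λ] [AddCommGroup V] [Module Λ V] [Fintype ι]
    (ν : Λ → ℝ) (ℓ : V → EReal)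
    (hsmul : ∀ (c : Λ) (x : V), c ≠ 0 → ℓ (c • x) = ℓ x - (ν c : EReal))
    (hadd : ∀ x y : V, ℓ (x + y) ≤ max (ℓ x) (ℓ y))
    (hneg : ∀ x : V, ℓ (-x) = ℓ x)
    (v w : ι → V)
    (hv : IsOrthogonal Λ ℓ v)
    (hw : ∀ i, ℓ (w i) < ℓ (v i)) :
    IsOrthogonal Λ ℓ (fun i => v i + w i) := by
  intro c
  have hℓ : IsNonarchimedean ℓ := hadd
  have hterm : ∀ i, ℓ (c i • (v i + w i)) = ℓ (c i • v i) := fun i => by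
    by_cases hc : c i = 0
    · simp only [hc, zero_smul]
    · rw [smul_add, hℓ.apply_add_eq_of_lt hneg (filtration_smul_lt_smul hsmul hc (hw i))]
  have hdom : ∀ i ∈ univ, c i • w i ≠ 0 → ℓ (c i • w i) < ℓ (c i • v i) :=
    fun i _ hi => filtration_smul_lt_smul hsmul (left_ne_zero_of_smul hi) (hw i)
  calc ℓ (∑ i, c i • (v i + w i)) = ℓ (∑ i, c i • v i + ∑ i, c i • w i) := by
        simp only [smul_add, sum_add_distrib]
    _ = ℓ (∑ i, c i • v i) := hℓ.apply_sum_add_eq hneg (hv c) hdom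
    _ = univ.sup fun i => ℓ (c i • v i) := hv c
    _ = univ.sup fun i => ℓ (c i • (v i + w i)) := sup_congr rfl fun i _ => (hterm i).symm

/-- A strictly-lower-filtration perturbation of an orthogonal family is
orthogonal. -/
theorem strict_lower_perturbation_preserves_orthogonality
    {Λ V ι : Type*} [Field Λ] [AddCommGroup V] [Module Λ V] [Fintype ι]
    (ν : Λ → ℝ) (ℓ : V → EReal)
    (hzero : ℓ 0 = ⊥)
    (hsmul : ∀ (c : Λ) (x : V), c ≠ 0 → ℓ (c • x) = ℓ x - (ν c : EReal))
    (hadd : ∀ x y : V, ℓ (x + y) ≤ max (ℓ x) (ℓ y))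
    (hneg : ∀ x : V, ℓ (-x) = ℓ x)
    (v w : ι → V)
    (hv : IsOrthogonal Λ ℓ v)
    (hw : ∀ i, ℓ (w i) < ℓ (v i)) :
    IsOrthogonal Λ ℓ (fun i => v i + w i) :=
  strict_lower_perturbation_preserves_orthogonality_general ν ℓ hsmul hadd hneg v w hv hw
end

section
/- Let K satisfy the irreducible condition for the prime p and let Λ = Λ^{K,ℝ_{>0}} denote the set of Novikov series with strictly positive valuation. For any polynomial h(x) ∈ Λ^{K,ℝ_{>0}}[x] of degree less than p, the equation x^p = 1 + h(x) has a solution in the Novikov field Λ^{K,ℝ}; while for any q not divisible by p and any such h, the equation x^p = ξ_p^q + h(x) has no solution in Λ^{K,ℝ}. -/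
open scoped BigOperators

/-!
The solution of `x ^ p = 1 + h(x)` is the limit of the iteration `Y ↦ Y + (1 + h(Y) - Y ^ p) / p`
started at `Y = 1`. If every coefficient of `h` has valuation `≥ ε > 0`, this map improves
`ν(Y - Z)` by at least `ε` on the series with `ν(Y - 1) ≥ ε`, because there
`(Y ^ p - Z ^ p) / (Y - Z) = ∑ Yʲ Zᵖ⁻¹⁻ʲ` differs from `p` by terms of valuation `≥ ε`; the iterates
converge since their coefficients below any bound eventually stabilize, and the limit is again a
Novikov series.

Conversely, a solution of `x ^ p = ζ + h(x)` has `ν(x) ≥ 0`, since otherwise `x ^ p` would be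
the only term of least valuation; comparing constant coefficients then gives `x(0) ^ p = ζ`, which
for `ζ = ξ ^ q` contradicts the irreducible condition.
-/

open HahnSeries Filter

section NovikovSeries

variable {K : Type*} [Field K]

local notation "ν" => HahnSeries.addVal ℝ K

theorem IsNovikov.isPWO_support {Γ : AddSubgroup ℝ} {a : ℝ → K} (ha : IsNovikov Γ a) :
    (Function.support a).IsPWO := by
  refine Set.partiallyWellOrderedOn_iff_exists_lt.2 fun f hf => ?_
  by_cases hup : ∃ n, f 0 ≤ f (n + 1)
  · obtain ⟨n, hn⟩ := hup
    exact ⟨0, n + 1, n.succ_pos, hn⟩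
  · push Not at hup
    obtain ⟨m, n, hmn, hfmn⟩ := Set.Finite.exists_lt_map_eq_of_forall_mem
      (t := {g | a g ≠ 0 ∧ g < f 0}) (fun n => ⟨hf (n + 1), hup n⟩) (ha.2 (f 0))
    exact ⟨m + 1, n + 1, by omega, hfmn.le⟩

def IsNovikov.toHahnSeries {Γ : AddSubgroup ℝ} {a : ℝ → K} (ha : IsNovikov Γ a) :
    HahnSeries ℝ K :=
  ⟨a, ha.isPWO_support⟩

theorem isNovikov_top_iff {x : HahnSeries ℝ K} :
    IsNovikov ⊤ x.coeff ↔ ∀ C : ℝ, (x.support ∩ Set.Iio C).Finite := by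
  simp only [IsNovikov, AddSubgroup.mem_top, implies_true, true_and]
  rfl

variable (K) in
def novikovSubring : Subring (HahnSeries ℝ K) where
  carrier := {x | IsNovikov ⊤ x.coeff}
  zero_mem' := isNovikov_top_iff.2 fun _ => by simp
  one_mem' := isNovikov_top_iff.2 fun _ => by
    simpa only [support_one] using (Set.finite_singleton 0).inter_of_left _
  add_mem' {x y} hx hy := isNovikov_top_iff.2 fun C => by
    refine ((isNovikov_top_iff.1 hx C).union (isNovikov_top_iff.1 hy C)).subset ?_
    rw [← Set.union_inter_distrib_right]
    exact Set.inter_subset_inter_left _ (support_add_subset x y)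
  neg_mem' {x} hx := by simpa only [Set.mem_ofPred_eq, isNovikov_top_iff, support_neg] using hx
  mul_mem' {x y} hx hy := isNovikov_top_iff.2 fun C => by
    refine (((isNovikov_top_iff.1 hx (C - y.order)).prod
      (isNovikov_top_iff.1 hy (C - x.order))).image fun g => g.1 + g.2).subset ?_
    rintro g ⟨hg, hgC⟩
    obtain ⟨i, hi, j, hj, rfl⟩ := support_mul_subset hg
    have hxi := order_le_of_coeff_ne_zero hi
    have hyj := order_le_of_coeff_ne_zero hj
    exact ⟨(i, j), ⟨⟨hi, by simp only [Set.mem_Iio] at hgC ⊢; linarith⟩,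
      ⟨hj, by simp only [Set.mem_Iio] at hgC ⊢; linarith⟩⟩, rfl⟩

theorem C_mem_novikovSubring (k : K) : C k ∈ novikovSubring K := by
  rw [C_apply]
  exact isNovikov_top_iff.2 fun _ =>
    ((Set.finite_singleton 0).subset support_single_subset).inter_of_left _

theorem novMul_coeff (x y : HahnSeries ℝ K) : novMul x.coeff y.coeff = (x * y).coeff := by
  funext g
  rw [coeff_mul]
  have hsupp : (Function.support fun h => x.coeff h * y.coeff (g - h)) ⊆
      ((Finset.antidiagonal x.isPWO_support y.isPWO_support g).image Prod.fst : Set ℝ) := by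
    intro h hh
    refine Finset.mem_image.2 ⟨(h, g - h), Finset.mem_antidiagonal.2
      ⟨left_ne_zero_of_mul hh, right_ne_zero_of_mul hh, by ring⟩, rfl⟩
  rw [novMul, finsum_eq_sum_of_support_subset _ hsupp, Finset.sum_image]
  · refine Finset.sum_congr rfl fun ij hij => ?_
    rw [← (Finset.mem_antidiagonal.1 hij).2.2, add_sub_cancel_left]
  · intro ij hij kl hkl h
    have := (Finset.mem_antidiagonal.1 hij).2.2.trans (Finset.mem_antidiagonal.1 hkl).2.2.symm
    exact Prod.ext h (by simp only [Finset.mem_coe] at *; linarith)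

theorem novPow_coeff (x : HahnSeries ℝ K) (n : ℕ) : novPow x.coeff n = (x ^ n).coeff := by
  induction n with
  | zero => funext g; simp [novPow, novOne, coeff_one]
  | succ n ih => rw [novPow, ih, novMul_coeff, pow_succ']

theorem novPow_eq_iff {n p : ℕ} (Y : HahnSeries ℝ K) (a : Fin n → HahnSeries ℝ K) (k : K) :
    (novPow Y.coeff p = fun g =>
        (if g = 0 then k else 0) + ∑ i, novMul (a i).coeff (novPow Y.coeff i) g) ↔
      Y ^ p = C k + ∑ i, a i * Y ^ (i : ℕ) := by
  have hrhs : (fun g => (if g = 0 then k else 0) + ∑ i, novMul (a i).coeff (novPow Y.coeff i) g) =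
      (C k + ∑ i, a i * Y ^ (i : ℕ)).coeff := by
    funext g
    simp only [coeff_add, coeff_sum, novPow_coeff, novMul_coeff, C_apply, coeff_single]
  rw [hrhs, HahnSeries.ext_iff, novPow_coeff]

theorem AddValuation.add_le_map_mul {R Γ₀ : Type*} [Ring R] [LinearOrderedAddCommMonoidWithTop Γ₀]
    (v : AddValuation R Γ₀) {x y : R} {a b : Γ₀} (hx : a ≤ v x) (hy : b ≤ v y) :
    a + b ≤ v (x * y) :=
  (v.map_mul x y).symm ▸ add_le_add hx hy

theorem addVal_C_nonneg (k : K) : 0 ≤ ν (C k) := by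
  rw [addVal_apply, C_apply, ← WithTop.coe_zero]
  exact orderTop_single_le

theorem addVal_pos_of_forall_coeff_ne_zero {x : HahnSeries ℝ K}
    (hx : ∀ g, x.coeff g ≠ 0 → 0 < g) : 0 < ν x := by
  rcases eq_or_ne x 0 with rfl | hx0
  · simp
  · rw [addVal_apply_of_ne hx0]
    exact WithTop.coe_pos.2 (hx _ (coeff_order_eq_zero.not.2 hx0))

theorem eq_zero_of_forall_le_addVal {x : HahnSeries ℝ K} (hx : ∀ r : ℝ, (r : WithTop ℝ) ≤ ν x) :
    x = 0 := by
  by_contra hx0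
  have := hx (x.order + 1)
  rw [addVal_apply_of_ne hx0, WithTop.coe_le_coe] at this
  linarith

theorem exists_pos_le_of_forall_pos {ι : Type*} [Finite ι] {f : ι → WithTop ℝ}
    (hf : ∀ i, 0 < f i) : ∃ ε : ℝ, 0 < ε ∧ ∀ i, (ε : WithTop ℝ) ≤ f i := by
  cases isEmpty_or_nonempty ι
  · exact ⟨1, one_pos, isEmptyElim⟩
  obtain ⟨i₀, hi₀⟩ := Finite.exists_min f
  obtain ⟨a, ha0, hai₀⟩ := exists_between (hf i₀)
  obtain ⟨ε, rfl⟩ := WithTop.ne_top_iff_exists.1 (hai₀.trans_le le_top).ne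
  exact ⟨ε, WithTop.coe_pos.1 ha0, fun i => hai₀.le.trans (hi₀ i)⟩

theorem exists_limit_mem_novikovSubring {u : ℕ → HahnSeries ℝ K} {r : ℕ → ℝ} (hr : Monotone r)
    (hr_top : Tendsto r atTop atTop) (hu : ∀ n, u n ∈ novikovSubring K)
    (hcauchy : ∀ n, (r n : WithTop ℝ) ≤ ν (u (n + 1) - u n)) :
    ∃ y ∈ novikovSubring K, ∀ n, (r n : WithTop ℝ) ≤ ν (y - u n) := by
  have hfar : ∀ n m, n ≤ m → (r n : WithTop ℝ) ≤ ν (u m - u n) := by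
    intro n m hnm
    induction m, hnm using Nat.le_induction with
    | base => simp
    | succ m hnm ih =>
      rw [← sub_add_sub_cancel (u (m + 1)) (u m) (u n)]
      exact AddValuation.map_le_add _ ((WithTop.coe_le_coe.2 (hr hnm)).trans (hcauchy m)) ih
  have hstable : ∀ n m g, n ≤ m → g < r n → (u m).coeff g = (u n).coeff g := by
    intro n m g hnm hg
    rw [← sub_eq_zero, ← coeff_sub]
    exact coeff_eq_zero_of_lt_orderTop ((WithTop.coe_lt_coe.2 hg).trans_le (hfar n m hnm))
  choose N hN using fun g : ℝ => (hr_top.eventually_gt_atTop g).exists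
  have hagree : ∀ n g, g < r n → (u (N g)).coeff g = (u n).coeff g := fun n g hg => by
    rw [← hstable (N g) (max n (N g)) g (le_max_right _ _) (hN g),
      hstable n (max n (N g)) g (le_max_left _ _) hg]
  have hy : IsNovikov ⊤ fun g => (u (N g)).coeff g := by
    refine ⟨fun _ _ => trivial, fun B => ?_⟩
    obtain ⟨n, hn⟩ := (hr_top.eventually_gt_atTop B).exists
    refine ((hu n).2 B).subset fun g ⟨hg, hgB⟩ => ⟨?_, hgB⟩
    rwa [← hagree n g (hgB.trans hn)]
  refine ⟨hy.toHahnSeries, hy, fun n => ?_⟩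
  rw [addVal_apply, le_orderTop_iff_forall]
  intro g hg
  rw [coeff_sub, sub_eq_zero]
  exact hagree n g (WithTop.coe_lt_coe.1 hg)

theorem iterate_of_contracting {T : HahnSeries ℝ K → HahnSeries ℝ K} {x₀ : HahnSeries ℝ K}
    {ε : ℝ} (hε : 0 ≤ ε) (hT₀ : (ε : WithTop ℝ) ≤ ν (T x₀ - x₀))
    (hcontr : ∀ x y, (ε : WithTop ℝ) ≤ ν (x - x₀) → (ε : WithTop ℝ) ≤ ν (y - x₀) →
      ∀ r : ℝ, (r : WithTop ℝ) ≤ ν (x - y) → ((r + ε : ℝ) : WithTop ℝ) ≤ ν (T x - T y))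
    (n : ℕ) : (ε : WithTop ℝ) ≤ ν (T^[n] x₀ - x₀) ∧
      (((n + 1) * ε : ℝ) : WithTop ℝ) ≤ ν (T^[n + 1] x₀ - T^[n] x₀) := by
  induction n with
  | zero => simpa using hT₀
  | succ n ih =>
    obtain ⟨hball, hstep⟩ := ih
    have hball' : (ε : WithTop ℝ) ≤ ν (T^[n + 1] x₀ - x₀) := by
      rw [← sub_add_sub_cancel _ (T^[n] x₀) x₀]
      refine AddValuation.map_le_add _ (le_trans ?_ hstep) hball
      exact WithTop.coe_le_coe.2 (by nlinarith [(n.cast_nonneg : (0 : ℝ) ≤ n)])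
    refine ⟨hball', ?_⟩
    have h := hcontr _ _ hball' hball _ hstep
    rw [← Function.iterate_succ_apply' T, ← Function.iterate_succ_apply' T] at h
    convert h using 2
    push_cast
    ring

theorem exists_fixedPoint_of_contracting {T : HahnSeries ℝ K → HahnSeries ℝ K}
    {x₀ : HahnSeries ℝ K} {ε : ℝ} (hε : 0 < ε) (hx₀ : x₀ ∈ novikovSubring K)
    (hT : Set.MapsTo T (novikovSubring K) (novikovSubring K))
    (hT₀ : (ε : WithTop ℝ) ≤ ν (T x₀ - x₀))
    (hcontr : ∀ x y, (ε : WithTop ℝ) ≤ ν (x - x₀) → (ε : WithTop ℝ) ≤ ν (y - x₀) →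
      ∀ r : ℝ, (r : WithTop ℝ) ≤ ν (x - y) → ((r + ε : ℝ) : WithTop ℝ) ≤ ν (T x - T y)) :
    ∃ x ∈ novikovSubring K, (ε : WithTop ℝ) ≤ ν (x - x₀) ∧ T x = x := by
  have hu := iterate_of_contracting hε.le hT₀ hcontr
  obtain ⟨y, hy, hyu⟩ := exists_limit_mem_novikovSubring (u := fun n => T^[n] x₀)
    (r := fun n => (n + 1) * ε) (fun m n h => by dsimp only; gcongr)
    ((tendsto_atTop_add_const_right _ 1 tendsto_natCast_atTop_atTop).atTop_mul_const hε)
    (fun n => hT.iterate n hx₀) (fun n => (hu n).2)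
  have hy₀ : (ε : WithTop ℝ) ≤ ν (y - x₀) := by simpa using hyu 0
  refine ⟨y, hy, hy₀, sub_eq_zero.1 (eq_zero_of_forall_le_addVal fun s => ?_)⟩
  obtain ⟨n, hn⟩ := exists_nat_gt (s / ε)
  have hs : s ≤ (n + 1) * ε := by
    rw [div_lt_iff₀ hε] at hn
    nlinarith
  have hTy : (((n + 1) * ε + ε : ℝ) : WithTop ℝ) ≤ ν (T y - T (T^[n] x₀)) :=
    hcontr y _ hy₀ (hu n).1 _ (hyu n)
  have hTu : (((n + 1 + 1) * ε : ℝ) : WithTop ℝ) ≤ ν (T (T^[n] x₀) - y) := by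
    rw [AddValuation.map_sub_swap, ← Function.iterate_succ_apply' T]
    exact_mod_cast hyu (n + 1)
  rw [← sub_add_sub_cancel (T y) (T (T^[n] x₀)) y]
  refine AddValuation.map_le_add _ ((WithTop.coe_le_coe.2 ?_).trans hTy)
    ((WithTop.coe_le_coe.2 ?_).trans hTu)
  all_goals linarith

theorem addVal_nonneg_of_le_addVal_sub_one {Y : HahnSeries ℝ K} {ε : ℝ} (hε : 0 ≤ ε)
    (hY : (ε : WithTop ℝ) ≤ ν (Y - 1)) : 0 ≤ ν Y := by
  simpa using AddValuation.map_le_add _ ((WithTop.coe_nonneg.2 hε).trans hY)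
    (AddValuation.map_one (addVal ℝ K)).ge

variable (K) in
def nearOne (ε : ℝ) (hε : 0 ≤ ε) : Submonoid (HahnSeries ℝ K) where
  carrier := {Y | (ε : WithTop ℝ) ≤ ν (Y - 1)}
  one_mem' := by simp
  mul_mem' {Y Z} hY hZ := by
    show _ ≤ ν (Y * Z - 1)
    rw [show Y * Z - 1 = Y * (Z - 1) + (Y - 1) by ring]
    have hYZ := (addVal ℝ K).add_le_map_mul (addVal_nonneg_of_le_addVal_sub_one hε hY) hZ
    rw [zero_add] at hYZ
    exact AddValuation.map_le_add _ hYZ hY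

-- Newton's method for `Y ^ p = 1 + ∑ aᵢ Yⁱ`, with the derivative frozen at its value `p` at `1`.
noncomputable def chordStep {n : ℕ} (p : ℕ) (a : Fin n → HahnSeries ℝ K) (Y : HahnSeries ℝ K) :
    HahnSeries ℝ K :=
  Y + C (p : K)⁻¹ * (1 + ∑ i, a i * Y ^ (i : ℕ) - Y ^ p)

theorem chordStep_eq_self_iff {n p : ℕ} (hp : (p : K) ≠ 0) (a : Fin n → HahnSeries ℝ K)
    (Y : HahnSeries ℝ K) : chordStep p a Y = Y ↔ Y ^ p = 1 + ∑ i, a i * Y ^ (i : ℕ) := by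
  rw [chordStep, add_eq_left, mul_eq_zero, or_iff_right (C_ne_zero (inv_ne_zero hp)), sub_eq_zero,
    eq_comm]

theorem chordStep_sub_chordStep {n p : ℕ} (hp : (p : K) ≠ 0) (a : Fin n → HahnSeries ℝ K)
    (Y Z : HahnSeries ℝ K) :
    chordStep p a Y - chordStep p a Z = C (p : K)⁻¹ * ((Y - Z) *
      (∑ j ∈ Finset.range p, (1 - Y ^ j * Z ^ (p - 1 - j)) +
        ∑ i, a i * ∑ j ∈ Finset.range i, Y ^ j * Z ^ ((i : ℕ) - 1 - j))) := by
  have hpow : ∀ m, Y ^ m - Z ^ m = (Y - Z) * ∑ j ∈ Finset.range m, Y ^ j * Z ^ (m - 1 - j) :=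
    fun m => by rw [mul_comm, geom_sum₂_mul]
  have hinv : C (p : K)⁻¹ * (p : HahnSeries ℝ K) = 1 := by
    rw [← map_natCast C, ← map_mul, inv_mul_cancel₀ hp, map_one]
  have hp_term : (Y - Z) * ∑ j ∈ Finset.range p, (1 - Y ^ j * Z ^ (p - 1 - j)) =
      (Y - Z) * p - (Y ^ p - Z ^ p) := by
    rw [Finset.sum_sub_distrib, hpow, Finset.sum_const, Finset.card_range, nsmul_one]
    ring
  have ha_term : (Y - Z) * ∑ i, a i * ∑ j ∈ Finset.range i, Y ^ j * Z ^ ((i : ℕ) - 1 - j) =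
      ∑ i, a i * Y ^ (i : ℕ) - ∑ i, a i * Z ^ (i : ℕ) := by
    rw [Finset.mul_sum, ← Finset.sum_sub_distrib]
    exact Finset.sum_congr rfl fun i _ => by rw [← mul_sub, hpow]; ring
  rw [mul_add, hp_term, ha_term, chordStep, chordStep]
  linear_combination (Z - Y) * hinv

theorem le_addVal_chordStep_sub {n p : ℕ} (hp : (p : K) ≠ 0) {a : Fin n → HahnSeries ℝ K}
    {ε r : ℝ} (hε : 0 ≤ ε) (ha : ∀ i, (ε : WithTop ℝ) ≤ ν (a i)) {Y Z : HahnSeries ℝ K}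
    (hY : Y ∈ nearOne K ε hε) (hZ : Z ∈ nearOne K ε hε) (hYZ : (r : WithTop ℝ) ≤ ν (Y - Z)) :
    ((r + ε : ℝ) : WithTop ℝ) ≤ ν (chordStep p a Y - chordStep p a Z) := by
  have hY0 := addVal_nonneg_of_le_addVal_sub_one hε hY
  have hZ0 := addVal_nonneg_of_le_addVal_sub_one hε hZ
  have hmon : ∀ j k, 0 ≤ ν (Y ^ j * Z ^ k) := fun j k => by
    rw [AddValuation.map_mul, AddValuation.map_pow, AddValuation.map_pow]
    exact add_nonneg (nsmul_nonneg hY0 j) (nsmul_nonneg hZ0 k)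
  have hp_term : (ε : WithTop ℝ) ≤ ν (∑ j ∈ Finset.range p, (1 - Y ^ j * Z ^ (p - 1 - j))) :=
    AddValuation.map_le_sum _ fun j _ => by
      rw [AddValuation.map_sub_swap]
      exact mul_mem (pow_mem hY j) (pow_mem hZ _)
  have ha_term : (ε : WithTop ℝ) ≤
      ν (∑ i, a i * ∑ j ∈ Finset.range i, Y ^ j * Z ^ ((i : ℕ) - 1 - j)) :=
    AddValuation.map_le_sum _ fun i _ => by
      simpa using (addVal ℝ K).add_le_map_mul (ha i) (AddValuation.map_le_sum _ fun j _ => hmon j _)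
  have h := (addVal ℝ K).add_le_map_mul (addVal_C_nonneg (p : K)⁻¹)
    ((addVal ℝ K).add_le_map_mul hYZ (AddValuation.map_le_add _ hp_term ha_term))
  rwa [zero_add, ← WithTop.coe_add, ← chordStep_sub_chordStep hp] at h

theorem exists_mem_novikovSubring_pow_eq {n p : ℕ} (hp : (p : K) ≠ 0)
    {a : Fin n → HahnSeries ℝ K} (ha : ∀ i, a i ∈ novikovSubring K) (ha_pos : ∀ i, 0 < ν (a i)) :
    ∃ Y ∈ novikovSubring K, Y ^ p = 1 + ∑ i, a i * Y ^ (i : ℕ) := by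
  obtain ⟨ε, hε, haε⟩ := exists_pos_le_of_forall_pos ha_pos
  have hstep_mem : Set.MapsTo (chordStep p a) (novikovSubring K) (novikovSubring K) := fun Y hY =>
    add_mem hY <| mul_mem (C_mem_novikovSubring _) <| sub_mem
      (add_mem (one_mem _) (sum_mem fun i _ => mul_mem (ha i) (pow_mem hY _))) (pow_mem hY _)
  have hstep_one : (ε : WithTop ℝ) ≤ ν (chordStep p a 1 - 1) := by
    have h := (addVal ℝ K).add_le_map_mul (addVal_C_nonneg (p : K)⁻¹)
      (AddValuation.map_le_sum (s := Finset.univ) _ fun i _ => haε i)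
    rwa [zero_add, show C (p : K)⁻¹ * ∑ i, a i = chordStep p a 1 - 1 by simp [chordStep]] at h
  obtain ⟨Y, hY, -, hfix⟩ := exists_fixedPoint_of_contracting hε (one_mem _) hstep_mem hstep_one
    fun Y Z hY hZ r hYZ => le_addVal_chordStep_sub hp hε.le haε hY hZ hYZ
  exact ⟨Y, hY, (chordStep_eq_self_iff hp a Y).1 hfix⟩

theorem coeff_zero_mul_of_addVal_nonneg {x y : HahnSeries ℝ K} (hx : 0 ≤ ν x) (hy : 0 ≤ ν y) :
    (x * y).coeff 0 = x.coeff 0 * y.coeff 0 := by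
  have hsupp : ∀ {z : HahnSeries ℝ K} {g : ℝ}, 0 ≤ ν z → z.coeff g ≠ 0 → 0 ≤ g := fun hz hg =>
    WithTop.coe_nonneg.1 (hz.trans (addVal_le_of_coeff_ne_zero hg))
  rw [coeff_mul, Finset.sum_eq_single (0, 0)]
  · rintro ⟨i, j⟩ hij hne
    obtain ⟨hi, hj, hij⟩ := Finset.mem_antidiagonal.1 hij
    have hi0 := hsupp hx hi
    have hj0 := hsupp hy hj
    exact absurd (Prod.ext (by dsimp only at *; linarith) (by dsimp only at *; linarith)) hne
  · intro h0
    by_contra hne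
    exact h0 (Finset.mem_antidiagonal.2
      ⟨left_ne_zero_of_mul hne, right_ne_zero_of_mul hne, add_zero 0⟩)

theorem coeff_zero_pow_of_addVal_nonneg {x : HahnSeries ℝ K} (hx : 0 ≤ ν x) (n : ℕ) :
    (x ^ n).coeff 0 = x.coeff 0 ^ n := by
  induction n with
  | zero => simp [coeff_one]
  | succ n ih =>
    have hxn : 0 ≤ ν (x ^ n) := by
      rw [AddValuation.map_pow]
      exact nsmul_nonneg hx n
    rw [pow_succ, coeff_zero_mul_of_addVal_nonneg hxn hx, ih, pow_succ]

theorem addVal_nonneg_of_pow_eq {p : ℕ} (hp : p ≠ 0) {A Y : HahnSeries ℝ K}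
    {a : Fin p → HahnSeries ℝ K} (hA : 0 ≤ ν A) (ha : ∀ i, 0 ≤ ν (a i))
    (h : Y ^ p = A + ∑ i, a i * Y ^ (i : ℕ)) : 0 ≤ ν Y := by
  by_contra hneg
  have hY : Y ≠ 0 := by rintro rfl; simp at hneg
  have hd : ν Y = Y.order := addVal_apply_of_ne hY
  have hd0 : Y.order < 0 := by
    rw [hd, not_le, ← WithTop.coe_zero, WithTop.coe_lt_coe] at hneg
    exact hneg
  have hp1 : (1 : ℝ) ≤ p := by exact_mod_cast Nat.one_le_iff_ne_zero.2 hp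
  have hterm : ∀ i : Fin p, (((p - 1) * Y.order : ℝ) : WithTop ℝ) ≤ ν (a i * Y ^ (i : ℕ)) := by
    intro i
    rw [AddValuation.map_mul, AddValuation.map_pow, hd, ← WithTop.coe_nsmul, nsmul_eq_mul]
    refine le_add_of_nonneg_of_le (ha i) (WithTop.coe_le_coe.2 ?_)
    have hi : (i : ℝ) + 1 ≤ p := by exact_mod_cast i.isLt
    nlinarith
  have hA' : (((p - 1) * Y.order : ℝ) : WithTop ℝ) ≤ ν A :=
    le_trans (WithTop.coe_le_coe.2 (by nlinarith)) hA
  have hYp := AddValuation.map_le_add _ hA'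
    (AddValuation.map_le_sum (s := Finset.univ) _ fun i _ => hterm i)
  rw [← h, AddValuation.map_pow, hd, ← WithTop.coe_nsmul, nsmul_eq_mul, WithTop.coe_le_coe] at hYp
  nlinarith

theorem coeff_zero_pow_eq_of_pow_eq {p : ℕ} (hp : p ≠ 0) {A Y : HahnSeries ℝ K}
    {a : Fin p → HahnSeries ℝ K} (hA : 0 ≤ ν A) (ha : ∀ i, 0 < ν (a i))
    (h : Y ^ p = A + ∑ i, a i * Y ^ (i : ℕ)) : Y.coeff 0 ^ p = A.coeff 0 := by
  have hY := addVal_nonneg_of_pow_eq hp hA (fun i => (ha i).le) h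
  rw [← coeff_zero_pow_of_addVal_nonneg hY, h, coeff_add, coeff_sum, Finset.sum_eq_zero, add_zero]
  intro i _
  refine coeff_eq_zero_of_lt_orderTop ?_
  rw [← addVal_apply, AddValuation.map_mul, AddValuation.map_pow, WithTop.coe_zero]
  exact add_pos_of_pos_of_nonneg (ha i) (nsmul_nonneg hY _)

end NovikovSeries

theorem perturbed_root_equations_general
    {K : Type*} [Field K] (p : ℕ)
    (hchar : (p : K) ≠ 0)
    (hK : ∀ (ξ : K), IsPrimitiveRoot ξ p → ∀ (x : K) (q : ℕ), x ^ p = ξ ^ q → p ∣ q)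
    -- the coefficients of `h`: Novikov series of strictly positive valuation
    (c : Fin p → ℝ → K)
    (hc : ∀ i, IsNovikov (⊤ : AddSubgroup ℝ) (c i))
    (hcpos : ∀ (i : Fin p) (g : ℝ), c i g ≠ 0 → 0 < g) :
    (∃ x : ℝ → K, IsNovikov (⊤ : AddSubgroup ℝ) x ∧
        novPow x p = fun g : ℝ =>
          novOne (K := K) g + ∑ i : Fin p, novMul (c i) (novPow x (i : ℕ)) g) ∧
    (∀ (ξ : K), IsPrimitiveRoot ξ p → ∀ q : ℕ, ¬ p ∣ q →
      ¬ ∃ x : ℝ → K, IsNovikov (⊤ : AddSubgroup ℝ) x ∧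
          novPow x p = fun g : ℝ =>
            (if g = 0 then ξ ^ q else 0) + ∑ i : Fin p, novMul (c i) (novPow x (i : ℕ)) g) := by
  set a : Fin p → HahnSeries ℝ K := fun i => (hc i).toHahnSeries
  have ha_pos : ∀ i, 0 < addVal ℝ K (a i) := fun i => addVal_pos_of_forall_coeff_ne_zero (hcpos i)
  refine ⟨?_, fun ξ hξ q hq ⟨x, hx, hxeq⟩ => hq (hK ξ hξ (x 0) q ?_)⟩
  · obtain ⟨Y, hY, hYeq⟩ := exists_mem_novikovSubring_pow_eq hchar hc ha_pos
    exact ⟨Y.coeff, hY, (novPow_eq_iff Y a 1).2 (by rwa [map_one])⟩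
  · have hp : p ≠ 0 := by rintro rfl; exact hchar Nat.cast_zero
    have h := coeff_zero_pow_eq_of_pow_eq hp (addVal_C_nonneg _) ha_pos
      ((novPow_eq_iff hx.toHahnSeries a (ξ ^ q)).1 hxeq)
    rwa [C_apply, coeff_single_same] at h

/-- Let `K` satisfy the irreducible condition for the prime `p` and let
`h(x) = ∑_{i<p} cᵢ xⁱ` be a polynomial of degree `< p` whose coefficients are Novikov
series of strictly positive valuation. Then `x ^ p = 1 + h(x)` has a solution in the
universal Novikov field, while for any `q` not divisible by `p` the equation
`x ^ p = ξ_p ^ q + h(x)` has no solution. -/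
theorem perturbed_root_equations
    {K : Type*} [Field K] (p : ℕ) (hp : p.Prime)
    (hchar : (p : K) ≠ 0)
    (hroots : ∃ ζ : K, IsPrimitiveRoot ζ p)
    (hK : ∀ (ξ : K), IsPrimitiveRoot ξ p → ∀ (x : K) (q : ℕ), x ^ p = ξ ^ q → p ∣ q)
    -- the coefficients of `h`: Novikov series of strictly positive valuation
    (c : Fin p → ℝ → K)
    (hc : ∀ i, IsNovikov (⊤ : AddSubgroup ℝ) (c i))
    (hcpos : ∀ (i : Fin p) (g : ℝ), c i g ≠ 0 → 0 < g) :
    (∃ x : ℝ → K, IsNovikov (⊤ : AddSubgroup ℝ) x ∧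
        novPow x p = fun g : ℝ =>
          novOne (K := K) g + ∑ i : Fin p, novMul (c i) (novPow x (i : ℕ)) g) ∧
    (∀ (ξ : K), IsPrimitiveRoot ξ p → ∀ q : ℕ, ¬ p ∣ q →
      ¬ ∃ x : ℝ → K, IsNovikov (⊤ : AddSubgroup ℝ) x ∧
          novPow x p = fun g : ℝ =>
            (if g = 0 then ξ ^ q else 0) + ∑ i : Fin p, novMul (c i) (novPow x (i : ℕ)) g) :=
  perturbed_root_equations_general p hchar hK c hc hcpos
end

section
/- Let A : (V₁, ℓ₁) → (V₂, ℓ₂) be a nonzero Λ-linear map between finite-dimensional filtered Novikov vector spaces. Then there exists a nonzero y* ∈ V₁ maximizing the filtration shift: ℓ₂(A y*) − ℓ₁(y*) ≥ ℓ₂(A y) − ℓ₁(y) for all nonzero y ∈ V₁. Moreover y* can be chosen to be an element of an orthogonal basis of V₁ extending an orthogonal basis of ker A. -/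
open scoped BigOperators

/-! An orthogonal basis can be adapted to any subspace `W` by exchange: take `w ∈ W` outside the
span of the basis vectors already lying in `W`, strip off its components along them, and put the
result in place of the basis vector whose term in its expansion has the largest filtration level;
the ultrametric inequality shows that the new basis is again orthogonal.

For an orthogonal basis `b` and `y = ∑ cₖ bₖ ≠ 0`, pick `j` with `cⱼ ≠ 0` such that `cⱼ A bⱼ`
dominates `ℓ₂ (A y)`. Orthogonality gives `ℓ₁ (cⱼ bⱼ) ≤ ℓ₁ y`, and the scalar `cⱼ` shifts both
levels by `ν cⱼ`, so the shift of `y` is at most that of `bⱼ`. Hence the basis vector with the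
largest shift, in an orthogonal basis adapted to `ker A`, is optimal. -/

theorem EReal.sub_sub_sub_cancel_right_coe (a b : EReal) (t : ℝ) : (a - t) - (b - t) = a - b := by
  induction a using EReal.rec <;> induction b using EReal.rec
  all_goals try simp
  · exact EReal.sub_bot (EReal.coe_ne_bot _)
  · norm_cast; ring
  · exact EReal.top_sub_coe _

section

variable {Λ V : Type*} [Field Λ] [AddCommGroup V] [Module Λ V] {ν : Λ → ℝ} {ℓ : V → EReal}

theorem filtration_smul_le_smul
    (hsmul : ∀ (c : Λ) (x : V), c ≠ 0 → ℓ (c • x) = ℓ x - (ν c : EReal))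
    {x y : V} (h : ℓ x ≤ ℓ y) (a : Λ) : ℓ (a • x) ≤ ℓ (a • y) := by
  rcases eq_or_ne a 0 with rfl | ha
  · simp
  · rw [hsmul a x ha, hsmul a y ha]
    exact EReal.sub_le_sub h le_rfl

theorem filtration_sum_le_sup {ι : Type*} (hzero : ℓ 0 = ⊥)
    (hadd : ∀ x y : V, ℓ (x + y) ≤ max (ℓ x) (ℓ y)) (s : Finset ι) (f : ι → V) :
    ℓ (∑ i ∈ s, f i) ≤ s.sup fun i => ℓ (f i) := by
  classical
  induction s using Finset.induction_on with
  | empty => simp [hzero]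
  | insert a s ha ih =>
    rw [Finset.sum_insert ha, Finset.sup_insert]
    exact (hadd _ _).trans (max_le_max le_rfl ih)

variable {ι : Type*} [Fintype ι]

theorem IsOrthogonal.le_apply_sum {v : ι → V} (hv : IsOrthogonal Λ ℓ v) (c : ι → Λ) (j : ι) :
    ℓ (c j • v j) ≤ ℓ (∑ i, c i • v i) :=
  hv c ▸ Finset.le_sup (f := fun i => ℓ (c i • v i)) (Finset.mem_univ j)

theorem isOrthogonal_iff_forall_le (hzero : ℓ 0 = ⊥)
    (hadd : ∀ x y : V, ℓ (x + y) ≤ max (ℓ x) (ℓ y)) {v : ι → V} :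
    IsOrthogonal Λ ℓ v ↔ ∀ (c : ι → Λ) (j : ι), ℓ (c j • v j) ≤ ℓ (∑ i, c i • v i) :=
  ⟨IsOrthogonal.le_apply_sum, fun h c =>
    (filtration_sum_le_sup hzero hadd _ _).antisymm (Finset.sup_le fun j _ => h c j)⟩

theorem IsOrthogonal.update [DecidableEq ι] (hzero : ℓ 0 = ⊥)
    (hsmul : ∀ (c : Λ) (x : V), c ≠ 0 → ℓ (c • x) = ℓ x - (ν c : EReal))
    (hadd : ∀ x y : V, ℓ (x + y) ≤ max (ℓ x) (ℓ y)) (hneg : ∀ x : V, ℓ (-x) = ℓ x)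
    {v : ι → V} (hv : IsOrthogonal Λ ℓ v) (c : ι → Λ) (j : ι)
    (hmax : ∀ i, ℓ (c i • v i) ≤ ℓ (c j • v j)) :
    IsOrthogonal Λ ℓ (Function.update v j (∑ i, c i • v i)) := by
  set w := ∑ i, c i • v i
  have hw : ℓ w = ℓ (c j • v j) :=
    ((hv c).le.trans (Finset.sup_le fun i _ => hmax i)).antisymm (hv.le_apply_sum c j)
  rw [isOrthogonal_iff_forall_le hzero hadd]
  intro d k
  set e : ι → Λ := d + d j • c - Pi.single j (d j)
  have hsum : ∑ i, d i • Function.update v j w i = ∑ i, e i • v i := by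
    rw [← Finset.sum_erase_add _ _ (Finset.mem_univ j), Function.update_self,
      Finset.sum_congr rfl fun i hi => by rw [Function.update_of_ne (Finset.ne_of_mem_erase hi)],
      Finset.sum_erase_eq_sub (Finset.mem_univ j)]
    simp only [e, w, Pi.sub_apply, Pi.add_apply, Pi.smul_apply, smul_eq_mul, sub_smul, add_smul,
      mul_smul, Finset.sum_sub_distrib, Finset.sum_add_distrib, ← Finset.smul_sum,
      Fintype.sum_single_smul]
    abel
  have hej : ℓ (e j • v j) = ℓ (d j • w) := by
    have : e j = d j * c j := by simp [e]
    rw [this, mul_smul]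
    exact (filtration_smul_le_smul hsmul hw.ge _).antisymm (filtration_smul_le_smul hsmul hw.le _)
  rw [hsum]
  rcases eq_or_ne k j with rfl | hkj
  · rw [Function.update_self, ← hej]
    exact hv.le_apply_sum e k
  · have hek : d k • v k = e k • v k - (d j * c k) • v k := by
      simp [e, hkj, add_smul, mul_smul]
    have hterm : ℓ ((d j * c k) • v k) ≤ ℓ (e j • v j) := by
      rw [hej, mul_smul]
      exact (filtration_smul_le_smul hsmul (hmax k) _).trans
        (filtration_smul_le_smul hsmul hw.ge _)
    rw [Function.update_of_ne hkj, hek, sub_eq_add_neg]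
    refine (hadd _ _).trans (max_le (hv.le_apply_sum e k) ?_)
    rw [hneg]
    exact hterm.trans (hv.le_apply_sum e j)

theorem exists_ne_zero_forall_apply_smul_le (hzero : ℓ 0 = ⊥) (v : ι → V) {c : ι → Λ}
    (hc : c ≠ 0) :
    ∃ j, c j ≠ 0 ∧ ∀ i, ℓ (c i • v i) ≤ ℓ (c j • v j) := by
  classical
  obtain ⟨i₀, hi₀⟩ := Function.ne_iff.1 hc
  obtain ⟨j, hj, hmax⟩ := (Finset.univ.filter fun i => c i ≠ 0).exists_max_image
    (fun i => ℓ (c i • v i)) ⟨i₀, by simpa using hi₀⟩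
  refine ⟨j, (Finset.mem_filter.1 hj).2, fun i => ?_⟩
  rcases eq_or_ne (c i) 0 with hi | hi
  · simp [hi, hzero]
  · exact hmax i (by simpa using hi)

theorem Module.Basis.exists_coe_eq_update [DecidableEq ι] (v : Module.Basis ι Λ V) (c : ι → Λ)
    {j : ι} (hj : c j ≠ 0) :
    ∃ b : Module.Basis ι Λ V, ⇑b = Function.update v j (∑ i, c i • v i) := by
  have : Nonempty ι := ⟨j⟩
  have hli : LinearIndependent Λ (Function.update v j (∑ i, c i • v i)) :=
    v.linearIndependent.update j _ ⟨1, one_mem _, Finsupp.equivFunOnFinite.symm c,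
      by simpa using hj, by simp [Finsupp.linearCombination_apply, Finsupp.sum_fintype]⟩
  exact ⟨basisOfLinearIndependentOfCardEqFinrank hli (Module.finrank_eq_card_basis v).symm,
    coe_basisOfLinearIndependentOfCardEqFinrank _ _⟩

theorem IsOrthogonal.exists_basis_insert_mem [DecidableEq ι] (hzero : ℓ 0 = ⊥)
    (hsmul : ∀ (c : Λ) (x : V), c ≠ 0 → ℓ (c • x) = ℓ x - (ν c : EReal))
    (hadd : ∀ x y : V, ℓ (x + y) ≤ max (ℓ x) (ℓ y)) (hneg : ∀ x : V, ℓ (-x) = ℓ x)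
    {v : Module.Basis ι Λ V} (hv : IsOrthogonal Λ ℓ v) {W : Submodule Λ V} {S : Finset ι}
    (hS : ∀ i ∈ S, v i ∈ W) (hSW : Submodule.span Λ (v '' S) ≠ W) :
    ∃ (b : Module.Basis ι Λ V) (j : ι),
      j ∉ S ∧ IsOrthogonal Λ ℓ b ∧ ∀ i ∈ insert j S, b i ∈ W := by
  have hle : Submodule.span Λ (v '' S) ≤ W :=
    Submodule.span_le.2 (by rintro _ ⟨i, hi, rfl⟩; exact hS i hi)
  obtain ⟨w, hwW, hw⟩ := SetLike.exists_of_lt (hle.lt_of_ne hSW)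
  set c : ι → Λ := fun i => if i ∈ S then 0 else v.repr w i
  have hc : c ≠ 0 := by
    intro h
    refine hw (v.mem_span_image.2 fun i hi => ?_)
    by_contra hiS
    rw [Finset.mem_coe] at hiS
    exact Finsupp.mem_support_iff.1 hi (by simpa [c, hiS] using congrFun h i)
  have hcW : ∑ i, c i • v i ∈ W := by
    have : ∑ i, c i • v i = w - ∑ i ∈ S, v.repr w i • v i :=
      calc ∑ i, c i • v i = ∑ i, (v.repr w i • v i - if i ∈ S then v.repr w i • v i else 0) :=
            Finset.sum_congr rfl fun i _ => by by_cases hi : i ∈ S <;> simp [c, hi]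
        _ = w - ∑ i ∈ S, v.repr w i • v i := by
            rw [Finset.sum_sub_distrib, v.sum_repr, Finset.sum_ite_mem, Finset.univ_inter]
    rw [this]
    exact W.sub_mem hwW (W.sum_mem fun i hi => W.smul_mem _ (hS i hi))
  obtain ⟨j, hcj, hmax⟩ := exists_ne_zero_forall_apply_smul_le hzero v hc
  have hjS : j ∉ S := fun hj => hcj (by simp [c, hj])
  obtain ⟨b, hb⟩ := v.exists_coe_eq_update c hcj
  refine ⟨b, j, hjS, hb ▸ hv.update hzero hsmul hadd hneg c j hmax, fun i hi => ?_⟩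
  rcases eq_or_ne i j with rfl | hij
  · simpa [hb] using hcW
  · simpa [hb, hij] using hS i ((Finset.mem_insert.1 hi).resolve_left hij)

theorem IsOrthogonal.exists_basis_span_image_eq [DecidableEq ι] (hzero : ℓ 0 = ⊥)
    (hsmul : ∀ (c : Λ) (x : V), c ≠ 0 → ℓ (c • x) = ℓ x - (ν c : EReal))
    (hadd : ∀ x y : V, ℓ (x + y) ≤ max (ℓ x) (ℓ y)) (hneg : ∀ x : V, ℓ (-x) = ℓ x)
    {v : Module.Basis ι Λ V} (hv : IsOrthogonal Λ ℓ v) (W : Submodule Λ V) (S : Finset ι)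
    (hS : ∀ i ∈ S, v i ∈ W) :
    ∃ (b : Module.Basis ι Λ V) (T : Finset ι),
      IsOrthogonal Λ ℓ b ∧ Submodule.span Λ (b '' T) = W := by
  by_cases hSW : Submodule.span Λ (v '' S) = W
  · exact ⟨v, S, hv, hSW⟩
  obtain ⟨b, j, hjS, hb, hbW⟩ := hv.exists_basis_insert_mem hzero hsmul hadd hneg hS hSW
  exact hb.exists_basis_span_image_eq hzero hsmul hadd hneg W (insert j S) hbW
termination_by Fintype.card ι - S.card
decreasing_by
  rw [Finset.card_insert_of_notMem hjS]
  have := Finset.card_lt_univ_of_notMem hjS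
  omega

theorem IsOrthogonal.exists_shift_le {V₂ : Type*} [AddCommGroup V₂] [Module Λ V₂]
    {ℓ₂ : V₂ → EReal}
    (hsmul : ∀ (c : Λ) (x : V), c ≠ 0 → ℓ (c • x) = ℓ x - (ν c : EReal))
    (hsmul₂ : ∀ (c : Λ) (x : V₂), c ≠ 0 → ℓ₂ (c • x) = ℓ₂ x - (ν c : EReal))
    (hadd₂ : ∀ x y : V₂, ℓ₂ (x + y) ≤ max (ℓ₂ x) (ℓ₂ y))
    {b : Module.Basis ι Λ V} (hb : IsOrthogonal Λ ℓ b) (A : V →ₗ[Λ] V₂) {y : V} (hy : y ≠ 0) :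
    ∃ j, ℓ₂ (A y) - ℓ y ≤ ℓ₂ (A (b j)) - ℓ (b j) := by
  set c := b.repr y
  have hs : c.support.Nonempty := Finsupp.support_nonempty_iff.2 (by simpa [c] using hy)
  have hAy : A y = ∑ k ∈ c.support, c k • A (b k) := by
    conv_lhs => rw [← b.linearCombination_repr y]
    simp [c, Finsupp.linearCombination_apply, Finsupp.sum]
  obtain ⟨j, hj, hAy_le⟩ : ∃ j ∈ c.support, ℓ₂ (A y) ≤ ℓ₂ (c j • A (b j)) :=
    (Finset.le_sup'_iff hs).1
      (hAy ▸ MvPowerSeries.Finset.Nonempty.map_sum_le_sup'_map ℓ₂ hs _ hadd₂)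
  have hcj : c j ≠ 0 := Finsupp.mem_support_iff.1 hj
  have hy_le : ℓ (c j • b j) ≤ ℓ y := b.sum_repr y ▸ hb.le_apply_sum c j
  refine ⟨j, ?_⟩
  calc ℓ₂ (A y) - ℓ y ≤ ℓ₂ (c j • A (b j)) - ℓ (c j • b j) := EReal.sub_le_sub hAy_le hy_le
    _ = ℓ₂ (A (b j)) - ℓ (b j) := by
      rw [hsmul₂ _ _ hcj, hsmul _ _ hcj, EReal.sub_sub_sub_cancel_right_coe]

end

theorem exists_filtration_optimal_element_general
    {Λ V₁ V₂ : Type*} [Field Λ]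
    [AddCommGroup V₁] [Module Λ V₁]
    [AddCommGroup V₂] [Module Λ V₂]
    (ν : Λ → ℝ) (ℓ₁ : V₁ → EReal) (ℓ₂ : V₂ → EReal)
    (hzero₁ : ℓ₁ 0 = ⊥)
    (hsmul₁ : ∀ (c : Λ) (x : V₁), c ≠ 0 → ℓ₁ (c • x) = ℓ₁ x - (ν c : EReal))
    (hadd₁ : ∀ x y : V₁, ℓ₁ (x + y) ≤ max (ℓ₁ x) (ℓ₁ y))
    (hneg₁ : ∀ x : V₁, ℓ₁ (-x) = ℓ₁ x)
    (hsmul₂ : ∀ (c : Λ) (x : V₂), c ≠ 0 → ℓ₂ (c • x) = ℓ₂ x - (ν c : EReal))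
    (hadd₂ : ∀ x y : V₂, ℓ₂ (x + y) ≤ max (ℓ₂ x) (ℓ₂ y))
    -- orthogonalizability of `V₁` and `V₂`
    (n₁ : ℕ) (b₁ : Module.Basis (Fin n₁) Λ V₁) (hb₁ : IsOrthogonal Λ ℓ₁ b₁)
    (A : V₁ →ₗ[Λ] V₂) (hA : A ≠ 0) :
    ∃ (n : ℕ) (b : Module.Basis (Fin n) Λ V₁) (S : Set (Fin n)) (i : Fin n),
      IsOrthogonal Λ ℓ₁ b ∧
      Submodule.span Λ (⇑b '' S) = LinearMap.ker A ∧
      b i ≠ 0 ∧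
      ∀ y : V₁, y ≠ 0 → ℓ₂ (A y) - ℓ₁ y ≤ ℓ₂ (A (b i)) - ℓ₁ (b i) := by
  obtain ⟨b, S, hb, hbS⟩ := hb₁.exists_basis_span_image_eq hzero₁ hsmul₁ hadd₁ hneg₁
    (LinearMap.ker A) ∅ (by simp)
  have : Nontrivial V₁ := by
    obtain ⟨x, hx⟩ := DFunLike.ne_iff.1 hA
    exact nontrivial_of_ne x 0 (by rintro rfl; simp at hx)
  have := b.index_nonempty
  obtain ⟨i, hi⟩ := Finite.exists_max fun k => ℓ₂ (A (b k)) - ℓ₁ (b k)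
  refine ⟨n₁, b, S, i, hb, hbS, b.ne_zero i, fun y hy => ?_⟩
  obtain ⟨j, hj⟩ := hb.exists_shift_le hsmul₁ hsmul₂ hadd₂ A hy
  exact hj.trans (hi j)

/-- A nonzero linear map `A : (V₁, ℓ₁) → (V₂, ℓ₂)` between
finite-dimensional filtered Novikov spaces admits a nonzero `y*` maximizing the filtration
shift `ℓ₂(Ay) − ℓ₁(y)`; moreover `y*` may be taken to be a member of an orthogonal basis of
`V₁` extending an orthogonal basis of `ker A`. -/
theorem exists_filtration_optimal_element
    {Λ V₁ V₂ : Type*} [Field Λ]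
    [AddCommGroup V₁] [Module Λ V₁] [FiniteDimensional Λ V₁]
    [AddCommGroup V₂] [Module Λ V₂] [FiniteDimensional Λ V₂]
    (ν : Λ → ℝ) (ℓ₁ : V₁ → EReal) (ℓ₂ : V₂ → EReal)
    (hzero₁ : ℓ₁ 0 = ⊥)
    (hsmul₁ : ∀ (c : Λ) (x : V₁), c ≠ 0 → ℓ₁ (c • x) = ℓ₁ x - (ν c : EReal))
    (hadd₁ : ∀ x y : V₁, ℓ₁ (x + y) ≤ max (ℓ₁ x) (ℓ₁ y))
    (hneg₁ : ∀ x : V₁, ℓ₁ (-x) = ℓ₁ x)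
    (hzero₂ : ℓ₂ 0 = ⊥)
    (hsmul₂ : ∀ (c : Λ) (x : V₂), c ≠ 0 → ℓ₂ (c • x) = ℓ₂ x - (ν c : EReal))
    (hadd₂ : ∀ x y : V₂, ℓ₂ (x + y) ≤ max (ℓ₂ x) (ℓ₂ y))
    (hneg₂ : ∀ x : V₂, ℓ₂ (-x) = ℓ₂ x)
    -- orthogonalizability of `V₁` and `V₂`
    (n₁ : ℕ) (b₁ : Module.Basis (Fin n₁) Λ V₁) (hb₁ : IsOrthogonal Λ ℓ₁ b₁)
    (n₂ : ℕ) (b₂ : Module.Basis (Fin n₂) Λ V₂) (hb₂ : IsOrthogonal Λ ℓ₂ b₂)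
    (A : V₁ →ₗ[Λ] V₂) (hA : A ≠ 0) :
    ∃ (n : ℕ) (b : Module.Basis (Fin n) Λ V₁) (S : Set (Fin n)) (i : Fin n),
      IsOrthogonal Λ ℓ₁ b ∧
      Submodule.span Λ (⇑b '' S) = LinearMap.ker A ∧
      b i ≠ 0 ∧
      ∀ y : V₁, y ≠ 0 → ℓ₂ (A y) - ℓ₁ y ≤ ℓ₂ (A (b i)) - ℓ₁ (b i) :=
  exists_filtration_optimal_element_general ν ℓ₁ ℓ₂ hzero₁ hsmul₁ hadd₁ hneg₁ hsmul₂ hadd₂ n₁ b₁ hb₁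
    A hA
end

section
/- Let ∂y_C = x_C in a filtered complex C with bar-length L_C = ℓ_C(y_C) − ℓ_C(x_C), and ∂z_D = w_D in a filtered complex D with bar-length L_D = ℓ_D(z_D) − ℓ_D(w_D). Assume x_C ⊗ z_D and y_C ⊗ w_D are orthogonal in C ⊗ D. Then ℓ_⊗(y_C ⊗ z_D) − ℓ_⊗(∂_⊗(y_C ⊗ z_D)) = min(L_C, L_D), i.e. the bar produced by the product of two finite bars has length equal to the minimum of the two lengths. -/
open scoped TensorProduct

theorem add_sub_max_add_eq_min_sub {α : Type*} [AddCommGroup α] [LinearOrder α]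
    [IsOrderedAddMonoid α] (a b c d : α) :
    a + c - max (b + c) (a + d) = min (a - b) (c - d) := by
  rw [← min_sub_sub_left]
  congr 1 <;> abel

theorem tensor_finite_bar_with_finite_bar_general
    {Λ C D : Type*} [Field Λ]
    [AddCommGroup C] [Module Λ C] [AddCommGroup D] [Module Λ D]
    (dC : C →ₗ[Λ] C) (dD : D →ₗ[Λ] D)
    (ℓC : C → ℝ) (ℓD : D → ℝ) (ℓT : C ⊗[Λ] D → ℝ)
    (hℓT : ∀ (u : C) (v : D), u ≠ 0 → v ≠ 0 → ℓT (u ⊗ₜ v) = ℓC u + ℓD v)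
    (dT : C ⊗[Λ] D →ₗ[Λ] C ⊗[Λ] D) (ε : Λ)
    (hdT : ∀ (u : C) (v : D), dT (u ⊗ₜ v) = (dC u) ⊗ₜ v + ε • (u ⊗ₜ (dD v)))
    (yC xC : C) (zD wD : D)
    (hyC : yC ≠ 0) (hxC : xC ≠ 0) (hzD : zD ≠ 0) (hwD : wD ≠ 0)
    (hdy : dC yC = xC) (hdz : dD zD = wD)
    (LC LD : ℝ)
    (hLC : ℓC yC - ℓC xC = LC) (hLD : ℓD zD - ℓD wD = LD)
    -- orthogonality of `x_C ⊗ z_D` and `y_C ⊗ w_D`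
    (horth : ℓT (xC ⊗ₜ zD + ε • (yC ⊗ₜ wD)) =
      max (ℓT (xC ⊗ₜ zD)) (ℓT (yC ⊗ₜ wD))) :
    ℓT (yC ⊗ₜ zD) - ℓT (dT (yC ⊗ₜ zD)) = min LC LD := by
  have hboundary : dT (yC ⊗ₜ zD) = xC ⊗ₜ zD + ε • (yC ⊗ₜ wD) := by
    rw [hdT, hdy, hdz]
  rw [hboundary, horth, hℓT yC zD hyC hzD, hℓT xC zD hxC hzD, hℓT yC wD hyC hwD,
    add_sub_max_add_eq_min_sub, hLC, hLD]

/-- The bar produced by the tensor product of two finite bars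
(`∂y_C = x_C` of length `L_C` and `∂z_D = w_D` of length `L_D`, with `x_C ⊗ z_D` and
`y_C ⊗ w_D` orthogonal) has length `min (L_C, L_D)`. -/
theorem tensor_finite_bar_with_finite_bar
    {Λ C D : Type*} [Field Λ]
    [AddCommGroup C] [Module Λ C] [AddCommGroup D] [Module Λ D]
    (dC : C →ₗ[Λ] C) (dD : D →ₗ[Λ] D)
    (ℓC : C → ℝ) (ℓD : D → ℝ) (ℓT : C ⊗[Λ] D → ℝ)
    (hℓT : ∀ (u : C) (v : D), u ≠ 0 → v ≠ 0 → ℓT (u ⊗ₜ v) = ℓC u + ℓD v)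
    (dT : C ⊗[Λ] D →ₗ[Λ] C ⊗[Λ] D) (ε : Λ) (hε : ε = 1 ∨ ε = -1)
    (hdT : ∀ (u : C) (v : D), dT (u ⊗ₜ v) = (dC u) ⊗ₜ v + ε • (u ⊗ₜ (dD v)))
    (yC xC : C) (zD wD : D)
    (hyC : yC ≠ 0) (hxC : xC ≠ 0) (hzD : zD ≠ 0) (hwD : wD ≠ 0)
    (hdy : dC yC = xC) (hdz : dD zD = wD)
    (LC LD : ℝ)
    (hLC : ℓC yC - ℓC xC = LC) (hLD : ℓD zD - ℓD wD = LD)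
    -- orthogonality of `x_C ⊗ z_D` and `y_C ⊗ w_D`
    (horth : ℓT (xC ⊗ₜ zD + ε • (yC ⊗ₜ wD)) =
      max (ℓT (xC ⊗ₜ zD)) (ℓT (yC ⊗ₜ wD))) :
    ℓT (yC ⊗ₜ zD) - ℓT (dT (yC ⊗ₜ zD)) = min LC LD :=
  tensor_finite_bar_with_finite_bar_general dC dD ℓC ℓD ℓT hℓT dT ε hdT yC xC zD wD hyC hxC hzD hwD
    hdy hdz LC LD hLC hLD horth
end
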